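/- Let P ∈ ℂ[[z]] with o(P) ≥ 2, let F_t(z) = z − t∇P(z) with formal inverse G_t(z) = z + t∇Q_t(z), where Q_t ∈ ℂ[[z,t]] has order at least 2 in z. Then Q_t(F_t(z)) = P(z) − (t/2)·⟨∇P, ∇P⟩ and P(G_t(z)) = Q_t(z) + (t/2)·⟨∇Q_t, ∇Q_t⟩. -/

import Mathlib

/-
Common setup: `ℂ[[z]]` is `MvPowerSeries (Fin n) ℂ`; `ℂ[[z,t]]` is realized as
`MvPowerSeries (Fin n) (PowerSeries ℂ)` (power series in `z` with coefficients in `ℂ[[t]]`),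
and `ℂ[t][[z]]` as `MvPowerSeries (Fin n) (Polynomial ℂ)`.  Substitution, partial
derivatives, Jacobian matrices, order and compositional inverses are defined below.
-/

noncomputable section

/-- Construct a multivariate power series from its coefficient function. -/
def PSmk {n : ℕ} {R : Type*} (f : (Fin n →₀ ℕ) → R) : MvPowerSeries (Fin n) R := f

/-- The formal partial derivative `∂/∂z i` on `R[[z₁,…,zₙ]]`. -/
def pd {n : ℕ} {R : Type*} [CommSemiring R] (i : Fin n) (f : MvPowerSeries (Fin n) R) :
    MvPowerSeries (Fin n) R :=
  PSmk fun d => (d i + 1 : ℕ) • MvPowerSeries.coeff (R := R) (d + Finsupp.single i 1) f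

/-- Substitution of the family `a` (each member of positive order in `z`) into `f`:
the coefficient of `z^m` in `f(a)` is `∑_d (coeff d f) · (coeff of z^m in ∏ aᵢ^dᵢ)`;
the sum is finite when each `aᵢ` has positive order. -/
def sub {n : ℕ} {R : Type*} [CommRing R] (f : MvPowerSeries (Fin n) R)
    (a : Fin n → MvPowerSeries (Fin n) R) : MvPowerSeries (Fin n) R :=
  PSmk fun m => ∑ᶠ d : Fin n →₀ ℕ,
    (MvPowerSeries.coeff (R := R) d f) * MvPowerSeries.coeff (R := R) m (∏ i, a i ^ d i)

/-- `f` has order (in `z`) at least `k`: all coefficients in total degree `< k` vanish. -/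
def ordGE {n : ℕ} {R : Type*} [CommSemiring R] (k : ℕ) (f : MvPowerSeries (Fin n) R) : Prop :=
  ∀ d : Fin n →₀ ℕ, (d.sum fun _ e => e) < k → MvPowerSeries.coeff (R := R) d f = 0

/-- Each component of the formal map `H` has order (in `z`) at least `k`. -/
def vordGE {n : ℕ} {R : Type*} [CommSemiring R] (k : ℕ)
    (H : Fin n → MvPowerSeries (Fin n) R) : Prop :=
  ∀ i, ordGE k (H i)

/-- The Jacobian matrix `(∂Hᵢ/∂z_j)` (with respect to `z`) of a formal map. -/
def jac {n : ℕ} {R : Type*} [CommSemiring R] (H : Fin n → MvPowerSeries (Fin n) R) :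
    Matrix (Fin n) (Fin n) (MvPowerSeries (Fin n) R) :=
  Matrix.of fun i j => pd j (H i)

/-- `G` is the formal compositional inverse of the formal map `F`. -/
def IsInv {n : ℕ} {R : Type*} [CommRing R] (F G : Fin n → MvPowerSeries (Fin n) R) : Prop :=
  (∀ i, sub (F i) G = MvPowerSeries.X i) ∧ (∀ i, sub (G i) F = MvPowerSeries.X i)

/-- `ℂ[[z,t]]`, realized as power series in `z` with coefficients in `ℂ[[t]]`. -/
abbrev PSZT (n : ℕ) := MvPowerSeries (Fin n) (PowerSeries ℂ)

/-- The element `t` of `ℂ[[z,t]]`. -/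
def tT {n : ℕ} : PSZT n := MvPowerSeries.C (σ := Fin n) (R := PowerSeries ℂ) PowerSeries.X

/-- The inclusion `ℂ[[z]] → ℂ[[z,t]]`. -/
def inclZ {n : ℕ} : MvPowerSeries (Fin n) ℂ →+* PSZT n :=
  MvPowerSeries.map (σ := Fin n) (PowerSeries.C (R := ℂ))

/-- Setting `t = 0`, as a ring homomorphism `ℂ[[z,t]] → ℂ[[z]]`. -/
def evalT0 {n : ℕ} : PSZT n →+* MvPowerSeries (Fin n) ℂ :=
  MvPowerSeries.map (σ := Fin n) (PowerSeries.constantCoeff (R := ℂ))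

/-- The formal partial derivative `∂/∂t` on `ℂ[[z,t]]`. -/
def dt {n : ℕ} (f : PSZT n) : PSZT n :=
  PSmk fun d => PowerSeries.mk fun k =>
    ((k + 1 : ℕ) : ℂ) * PowerSeries.coeff (R := ℂ) (k + 1) (MvPowerSeries.coeff d f)

/-- `ℂ[t][[z]]`: power series in `z` whose coefficients are polynomials in `t`. -/
abbrev PSZP (n : ℕ) := MvPowerSeries (Fin n) (Polynomial ℂ)

/-- The element `t` of `ℂ[t][[z]]`. -/
def tP {n : ℕ} : PSZP n := MvPowerSeries.C (σ := Fin n) (R := Polynomial ℂ) Polynomial.X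

/-- The inclusion `ℂ[[z]] → ℂ[t][[z]]`. -/
def inclZP {n : ℕ} : MvPowerSeries (Fin n) ℂ →+* PSZP n :=
  MvPowerSeries.map (σ := Fin n) Polynomial.C

/-- The inclusion `ℂ[t][[z]] → ℂ[[z,t]]`. -/
def polyToSer {n : ℕ} : PSZP n →+* PSZT n :=
  MvPowerSeries.map (σ := Fin n) Polynomial.coeToPowerSeries.ringHom

/-- The substitution `t ↦ t + s` on `ℂ[t][[z]]`, for `s ∈ ℂ`. -/
def tshift {n : ℕ} (s : ℂ) : PSZP n →+* PSZP n :=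
  MvPowerSeries.map (σ := Fin n)
    ((Polynomial.aeval (R := ℂ) (Polynomial.X + Polynomial.C s)).toRingHom)

open MvPowerSeries in
theorem coeff_PSmk {n : ℕ} {R : Type*} [CommSemiring R] (f : (Fin n →₀ ℕ) → R) (d) :
    MvPowerSeries.coeff (R := R) d (PSmk f) = f d := rfl

namespace Stmt16Aux

open MvPowerSeries Finset

variable {n : ℕ} {R : Type*}

/-- total degree -/
def degT {n : ℕ} (d : Fin n →₀ ℕ) : ℕ := ∑ i, d i

theorem dsum_eq (d : Fin n →₀ ℕ) : (d.sum fun _ e => e) = degT d :=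
  Finsupp.sum_fintype _ _ fun _ => rfl

theorem degT_add (a b : Fin n →₀ ℕ) : degT (a + b) = degT a + degT b := by
  simp [degT, Finset.sum_add_distrib]

theorem degT_single (i : Fin n) (k : ℕ) : degT (Finsupp.single i k) = k := by
  simp [degT, Finsupp.single_apply]

theorem degT_eq_zero {d : Fin n →₀ ℕ} : degT d = 0 ↔ d = 0 := by
  constructor
  · intro h
    ext i
    have := Finset.sum_eq_zero_iff.mp h i (Finset.mem_univ i)
    simpa using this
  · rintro rfl; simp [degT]

theorem le_degT (d : Fin n →₀ ℕ) (i : Fin n) : d i ≤ degT d :=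
  Finset.single_le_sum (fun _ _ => Nat.zero_le _) (Finset.mem_univ i)

theorem degT_mono {d e : Fin n →₀ ℕ} (h : d ≤ e) : degT d ≤ degT e :=
  Finset.sum_le_sum fun i _ => (Finsupp.le_def.mp h) i

section CommRing
variable [CommRing R]

theorem ordGE_iff {k : ℕ} {f : MvPowerSeries (Fin n) R} :
    ordGE k f ↔ ∀ d, degT d < k → MvPowerSeries.coeff (R := R) d f = 0 := by
  unfold ordGE; simp_rw [dsum_eq]

theorem coeff_pd (i : Fin n) (f : MvPowerSeries (Fin n) R) (d) :
    MvPowerSeries.coeff (R := R) d (pd i f)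
      = (d i + 1) • MvPowerSeries.coeff (R := R) (d + Finsupp.single i 1) f := rfl

theorem ordGE_mul {k l : ℕ} {f g : MvPowerSeries (Fin n) R}
    (hf : ordGE k f) (hg : ordGE l g) : ordGE (k + l) (f * g) := by
  rw [ordGE_iff] at hf hg ⊢
  intro d hd
  rw [MvPowerSeries.coeff_mul]
  apply Finset.sum_eq_zero
  rintro ⟨p, q⟩ hpq
  rw [Finset.HasAntidiagonal.mem_antidiagonal] at hpq
  have hdeg : degT p + degT q < k + l := by
    rw [← degT_add, hpq]; exact hd
  rcases lt_or_ge (degT p) k with h | h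
  · rw [hf p h, zero_mul]
  · rw [hg q (by omega), mul_zero]

theorem ordGE_zero_any {f : MvPowerSeries (Fin n) R} : ordGE 0 f := by
  intro d hd; omega

theorem ordGE_pow {f : MvPowerSeries (Fin n) R} (hf : ordGE 1 f) (e : ℕ) :
    ordGE e (f ^ e) := by
  induction e with
  | zero => exact ordGE_zero_any
  | succ m ih => rw [pow_succ]; exact ordGE_mul ih hf

theorem ordGE_prod {ι : Type*} (s : Finset ι) (b : ι → MvPowerSeries (Fin n) R) (k : ι → ℕ)
    (h : ∀ i ∈ s, ordGE (k i) (b i)) :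
    ordGE (∑ i ∈ s, k i) (∏ i ∈ s, b i) := by
  induction s using Finset.cons_induction with
  | empty => simpa using ordGE_zero_any
  | cons i s hi ih =>
    rw [Finset.sum_cons, Finset.prod_cons]
    exact ordGE_mul (h i (Finset.mem_cons_self i s)) (ih fun j hj => h j (Finset.mem_cons_of_mem hj))

theorem ordGE_prodpow {a : Fin n → MvPowerSeries (Fin n) R} (ha : vordGE 1 a) (d : Fin n →₀ ℕ) :
    ordGE (degT d) (∏ i, a i ^ d i) :=
  ordGE_prod Finset.univ _ _ fun i _ => ordGE_pow (ha i) (d i)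

/-- the finite set of exponents of total degree at most `N` -/
def DD (n N : ℕ) : Finset (Fin n →₀ ℕ) :=
  (Finset.Iic (Finsupp.equivFunOnFinite.symm fun _ => N)).filter fun d => degT d ≤ N

theorem mem_DD {N : ℕ} {d : Fin n →₀ ℕ} : d ∈ DD n N ↔ degT d ≤ N := by
  constructor
  · intro h; exact (Finset.mem_filter.mp h).2
  · intro h
    refine Finset.mem_filter.mpr ⟨Finset.mem_Iic.mpr ?_, h⟩
    rw [Finsupp.le_def]
    intro i
    simpa using (le_degT d i).trans h

theorem coeff_sub_eq {a : Fin n → MvPowerSeries (Fin n) R} (ha : vordGE 1 a)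
    (f : MvPowerSeries (Fin n) R) (m : Fin n →₀ ℕ) :
    MvPowerSeries.coeff (R := R) m (sub f a)
      = ∑ d ∈ DD n (degT m),
          MvPowerSeries.coeff (R := R) d f * MvPowerSeries.coeff (R := R) m (∏ i, a i ^ d i) := by
  have : MvPowerSeries.coeff (R := R) m (sub f a)
      = ∑ᶠ d : Fin n →₀ ℕ,
          MvPowerSeries.coeff (R := R) d f * MvPowerSeries.coeff (R := R) m (∏ i, a i ^ d i) := rfl
  rw [this]
  apply finsum_eq_sum_of_support_subset
  intro d hd
  simp only [Function.mem_support] at hd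
  rw [Finset.mem_coe, mem_DD]
  by_contra hlt
  push_neg at hlt
  have := ordGE_iff.mp (ordGE_prodpow ha d) m hlt
  rw [this, mul_zero] at hd
  exact hd rfl

end CommRing
end Stmt16Aux
namespace Stmt16Aux
open MvPowerSeries Finset

variable {n : ℕ} {R : Type*} [CommRing R] {a : Fin n → MvPowerSeries (Fin n) R}

theorem coeff_sub_congr (ha : vordGE 1 a) {f g : MvPowerSeries (Fin n) R} (m : Fin n →₀ ℕ)
    (h : ∀ d, degT d ≤ degT m → MvPowerSeries.coeff (R := R) d f = MvPowerSeries.coeff (R := R) d g) :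
    MvPowerSeries.coeff (R := R) m (sub f a) = MvPowerSeries.coeff (R := R) m (sub g a) := by
  rw [coeff_sub_eq ha, coeff_sub_eq ha]
  exact Finset.sum_congr rfl fun d hd => by rw [h d (mem_DD.mp hd)]

theorem sub_add' (ha : vordGE 1 a) (f g : MvPowerSeries (Fin n) R) :
    sub (f + g) a = sub f a + sub g a := by
  apply MvPowerSeries.ext; intro m
  rw [map_add, coeff_sub_eq ha, coeff_sub_eq ha, coeff_sub_eq ha, ← Finset.sum_add_distrib]
  exact Finset.sum_congr rfl fun d _ => by rw [map_add, add_mul]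

theorem sub_zero' (ha : vordGE 1 a) : sub (0 : MvPowerSeries (Fin n) R) a = 0 := by
  apply MvPowerSeries.ext; intro m
  rw [coeff_sub_eq ha, map_zero]
  exact Finset.sum_eq_zero fun d _ => by rw [map_zero, zero_mul]

theorem sub_sum' (ha : vordGE 1 a) {ι : Type*} (s : Finset ι)
    (b : ι → MvPowerSeries (Fin n) R) :
    sub (∑ j ∈ s, b j) a = ∑ j ∈ s, sub (b j) a := by
  induction s using Finset.cons_induction with
  | empty => simpa using sub_zero' ha
  | cons i s hi ih =>
    rw [Finset.sum_cons, Finset.sum_cons, sub_add' ha, ih]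

theorem sub_C_mul (ha : vordGE 1 a) (r : R) (f : MvPowerSeries (Fin n) R) :
    sub (MvPowerSeries.C (σ := Fin n) (R := R) r * f) a = MvPowerSeries.C (σ := Fin n) (R := R) r * sub f a := by
  apply MvPowerSeries.ext; intro m
  rw [MvPowerSeries.coeff_C_mul, coeff_sub_eq ha, coeff_sub_eq ha, Finset.mul_sum]
  exact Finset.sum_congr rfl fun d _ => by rw [MvPowerSeries.coeff_C_mul, mul_assoc]

theorem sub_monomial (ha : vordGE 1 a) (d : Fin n →₀ ℕ) (c : R) :
    sub (MvPowerSeries.monomial (R := R) d c) a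
      = MvPowerSeries.C (σ := Fin n) (R := R) c * ∏ i, a i ^ d i := by
  classical
  apply MvPowerSeries.ext; intro m
  rw [coeff_sub_eq ha, MvPowerSeries.coeff_C_mul]
  have : ∀ d' ∈ DD n (degT m),
      MvPowerSeries.coeff (R := R) d' (MvPowerSeries.monomial (R := R) d c)
        * MvPowerSeries.coeff (R := R) m (∏ i, a i ^ d' i)
      = if d' = d then c * MvPowerSeries.coeff (R := R) m (∏ i, a i ^ d' i) else 0 := by
    intro d' _
    rw [MvPowerSeries.coeff_monomial]
    split <;> simp
  rw [Finset.sum_congr rfl this, Finset.sum_ite_eq' (DD n (degT m)) d]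
  by_cases hd : d ∈ DD n (degT m)
  · rw [if_pos hd]
  · rw [if_neg hd]
    have : degT m < degT d := by
      by_contra hle; exact hd (mem_DD.mpr (by omega))
    rw [ordGE_iff.mp (ordGE_prodpow ha d) m this, mul_zero]

theorem sub_X' (ha : vordGE 1 a) (i : Fin n) : sub (MvPowerSeries.X i) a = a i := by
  rw [MvPowerSeries.X_def, sub_monomial ha, map_one, one_mul]
  rw [Finset.prod_eq_single i (fun j _ hj => by
    rw [Finsupp.single_eq_of_ne hj, pow_zero]) (by simp)]
  rw [Finsupp.single_eq_same, pow_one]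

theorem sub_C' (ha : vordGE 1 a) (r : R) :
    sub (MvPowerSeries.C (σ := Fin n) (R := R) r) a = MvPowerSeries.C (σ := Fin n) (R := R) r := by
  have : (MvPowerSeries.C (σ := Fin n) (R := R) r) = MvPowerSeries.monomial (R := R) 0 r := rfl
  rw [this, sub_monomial ha]
  simp [← this]

theorem sub_one' (ha : vordGE 1 a) : sub (1 : MvPowerSeries (Fin n) R) a = 1 := by
  have := sub_C' ha (1 : R); rwa [map_one] at this

/-- truncation in degrees ≤ N, as a power series -/
def TN (N : ℕ) (f : MvPowerSeries (Fin n) R) : MvPowerSeries (Fin n) R :=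
  ∑ d ∈ DD n N, MvPowerSeries.monomial (R := R) d (MvPowerSeries.coeff (R := R) d f)

theorem coeff_TN {N : ℕ} {d : Fin n →₀ ℕ} (h : degT d ≤ N) (f : MvPowerSeries (Fin n) R) :
    MvPowerSeries.coeff (R := R) d (TN N f) = MvPowerSeries.coeff (R := R) d f := by
  classical
  rw [TN, map_sum]
  have : ∀ d' ∈ DD n N,
      MvPowerSeries.coeff (R := R) d (MvPowerSeries.monomial (R := R) d' (MvPowerSeries.coeff (R := R) d' f))
        = if d' = d then MvPowerSeries.coeff (R := R) d' f else 0 := by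
    intro d' _
    rw [MvPowerSeries.coeff_monomial]
    split
    · rename_i hh; rw [if_pos (by rw [hh])]
    · rename_i hh; rw [if_neg (by intro hh2; exact hh (by rw [hh2]))]
  rw [Finset.sum_congr rfl this, Finset.sum_ite_eq' (DD n N) d, if_pos (mem_DD.mpr h)]

theorem sub_TN_mul_TN (ha : vordGE 1 a) (N : ℕ) (f g : MvPowerSeries (Fin n) R) :
    sub (TN N f * TN N g) a = sub (TN N f) a * sub (TN N g) a := by
  rw [TN, TN, Finset.sum_mul_sum, sub_sum' ha]
  have h1 : ∀ d ∈ DD n N, sub (∑ e ∈ DD n N,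
      MvPowerSeries.monomial (R := R) d (MvPowerSeries.coeff (R := R) d f)
        * MvPowerSeries.monomial (R := R) e (MvPowerSeries.coeff (R := R) e g)) a
      = (MvPowerSeries.C (σ := Fin n) (R := R) (MvPowerSeries.coeff (R := R) d f) * ∏ i, a i ^ d i)
        * ∑ e ∈ DD n N,
            MvPowerSeries.C (σ := Fin n) (R := R) (MvPowerSeries.coeff (R := R) e g) * ∏ i, a i ^ e i := by
    intro d _
    rw [sub_sum' ha, Finset.mul_sum]
    apply Finset.sum_congr rfl
    intro e _
    rw [MvPowerSeries.monomial_mul_monomial, sub_monomial ha, map_mul]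
    have hprod : (∏ i, a i ^ (d + e) i) = (∏ i, a i ^ d i) * ∏ i, a i ^ e i := by
      rw [← Finset.prod_mul_distrib]
      exact Finset.prod_congr rfl fun i _ => by
        rw [Finsupp.add_apply, pow_add]
    rw [hprod]; ring
  rw [Finset.sum_congr rfl h1, ← Finset.sum_mul]
  congr 1
  · rw [sub_sum' ha]
    exact Finset.sum_congr rfl fun d _ => (sub_monomial ha d _).symm
  · rw [sub_sum' ha]
    exact Finset.sum_congr rfl fun e _ => (sub_monomial ha e _).symm

theorem coeff_mul_congr {f g f' g' : MvPowerSeries (Fin n) R} {N : ℕ}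
    (hf : ∀ d, degT d ≤ N → MvPowerSeries.coeff (R := R) d f = MvPowerSeries.coeff (R := R) d f')
    (hg : ∀ d, degT d ≤ N → MvPowerSeries.coeff (R := R) d g = MvPowerSeries.coeff (R := R) d g')
    {d : Fin n →₀ ℕ} (hd : degT d ≤ N) :
    MvPowerSeries.coeff (R := R) d (f * g) = MvPowerSeries.coeff (R := R) d (f' * g') := by
  rw [MvPowerSeries.coeff_mul, MvPowerSeries.coeff_mul]
  apply Finset.sum_congr rfl
  rintro ⟨p, q⟩ hpq
  rw [Finset.HasAntidiagonal.mem_antidiagonal] at hpq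
  have hdd : degT p + degT q = degT d := by rw [← degT_add, hpq]
  rw [hf p (by omega), hg q (by omega)]

theorem sub_mul' (ha : vordGE 1 a) (f g : MvPowerSeries (Fin n) R) :
    sub (f * g) a = sub f a * sub g a := by
  apply MvPowerSeries.ext; intro m
  set N := degT m with hN
  have hTf : ∀ d, degT d ≤ N → MvPowerSeries.coeff (R := R) d f = MvPowerSeries.coeff (R := R) d (TN N f) :=
    fun d hd => (coeff_TN hd f).symm
  have hTg : ∀ d, degT d ≤ N → MvPowerSeries.coeff (R := R) d g = MvPowerSeries.coeff (R := R) d (TN N g) :=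
    fun d hd => (coeff_TN hd g).symm
  have step1 : MvPowerSeries.coeff (R := R) m (sub (f * g) a)
      = MvPowerSeries.coeff (R := R) m (sub (TN N f * TN N g) a) := by
    apply coeff_sub_congr ha
    intro d hd
    exact coeff_mul_congr hTf hTg hd
  have step3 : MvPowerSeries.coeff (R := R) m (sub f a * sub g a)
      = MvPowerSeries.coeff (R := R) m (sub (TN N f) a * sub (TN N g) a) := by
    apply coeff_mul_congr (N := N)
    · intro d hd; exact coeff_sub_congr ha d fun e he => hTf e (le_trans he hd)
    · intro d hd; exact coeff_sub_congr ha d fun e he => hTg e (le_trans he hd)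
    · omega
  rw [step1, sub_TN_mul_TN ha, step3]

theorem sub_sub'' (ha : vordGE 1 a) (f g : MvPowerSeries (Fin n) R) :
    sub (f - g) a = sub f a - sub g a := by
  have h := sub_add' ha (f - g) g
  rw [sub_add_cancel] at h
  rw [h]; ring

theorem constantCoeff_sub' (ha : vordGE 1 a) (f : MvPowerSeries (Fin n) R) :
    MvPowerSeries.constantCoeff (σ := Fin n) (R := R) (sub f a)
      = MvPowerSeries.constantCoeff (σ := Fin n) (R := R) f := by
  rw [← MvPowerSeries.coeff_zero_eq_constantCoeff_apply,
    ← MvPowerSeries.coeff_zero_eq_constantCoeff_apply, coeff_sub_eq ha]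
  have hD : DD n (degT (0 : Fin n →₀ ℕ)) = {0} := by
    apply Finset.ext; intro d
    rw [mem_DD, Finset.mem_singleton]
    constructor
    · intro h; exact degT_eq_zero.mp (by simpa [degT_eq_zero.mpr rfl] using h)
    · rintro rfl; rfl
  rw [hD, Finset.sum_singleton]
  simp

end Stmt16Aux
namespace Stmt16Aux
open MvPowerSeries Finset

variable {n : ℕ} {R : Type*} [CommRing R]

theorem pd_add (i : Fin n) (f g : MvPowerSeries (Fin n) R) :
    pd i (f + g) = pd i f + pd i g := by
  apply MvPowerSeries.ext; intro d
  rw [map_add, coeff_pd, coeff_pd, coeff_pd, map_add, smul_add]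

theorem pd_zero (i : Fin n) : pd i (0 : MvPowerSeries (Fin n) R) = 0 := by
  apply MvPowerSeries.ext; intro d
  rw [coeff_pd, map_zero, map_zero, smul_zero]

theorem pd_sum (i : Fin n) {ι : Type*} (s : Finset ι) (b : ι → MvPowerSeries (Fin n) R) :
    pd i (∑ j ∈ s, b j) = ∑ j ∈ s, pd i (b j) := by
  induction s using Finset.cons_induction with
  | empty => simpa using pd_zero i
  | cons j s hj ih => rw [Finset.sum_cons, Finset.sum_cons, pd_add, ih]

theorem pd_sub (i : Fin n) (f g : MvPowerSeries (Fin n) R) :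
    pd i (f - g) = pd i f - pd i g := by
  apply MvPowerSeries.ext; intro d
  rw [map_sub, coeff_pd, coeff_pd, coeff_pd, map_sub, smul_sub]

theorem pd_C_mul (i : Fin n) (r : R) (f : MvPowerSeries (Fin n) R) :
    pd i (MvPowerSeries.C (σ := Fin n) (R := R) r * f) = MvPowerSeries.C (σ := Fin n) (R := R) r * pd i f := by
  apply MvPowerSeries.ext; intro d
  rw [coeff_pd, MvPowerSeries.coeff_C_mul, MvPowerSeries.coeff_C_mul, coeff_pd,
    nsmul_eq_mul, nsmul_eq_mul]
  ring

theorem pd_monomial (i : Fin n) (d : Fin n →₀ ℕ) (c : R) :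
    pd i (MvPowerSeries.monomial (R := R) d c)
      = (d i) • MvPowerSeries.monomial (R := R) (d - Finsupp.single i 1) c := by
  classical
  apply MvPowerSeries.ext; intro u
  rw [coeff_pd, map_nsmul, MvPowerSeries.coeff_monomial, MvPowerSeries.coeff_monomial]
  by_cases h : u + Finsupp.single i 1 = d
  · rw [if_pos h]
    have hdi : d i = u i + 1 := by
      rw [← h, Finsupp.add_apply, Finsupp.single_eq_same]
    have hu : u = d - Finsupp.single i 1 := by
      rw [← h, add_tsub_cancel_right]
    rw [if_pos hu, hdi]
  · rw [if_neg h, smul_zero]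
    by_cases hu : u = d - Finsupp.single i 1
    · by_cases hdi : d i = 0
      · rw [if_pos hu, hdi, zero_smul]
      · exfalso
        apply h
        rw [hu, tsub_add_cancel_of_le]
        rw [Finsupp.single_le_iff]
        omega
    · rw [if_neg hu, smul_zero]

theorem pd_one (i : Fin n) : pd i (1 : MvPowerSeries (Fin n) R) = 0 := by
  have : (1 : MvPowerSeries (Fin n) R) = MvPowerSeries.monomial (R := R) 0 1 := rfl
  rw [this, pd_monomial]
  simp

theorem pd_X_self (i : Fin n) : pd i (MvPowerSeries.X i : MvPowerSeries (Fin n) R) = 1 := by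
  rw [MvPowerSeries.X_def, pd_monomial, Finsupp.single_eq_same, tsub_self, one_smul]
  rfl

theorem pd_X_ne {i j : Fin n} (h : j ≠ i) :
    pd i (MvPowerSeries.X j : MvPowerSeries (Fin n) R) = 0 := by
  rw [MvPowerSeries.X_def, pd_monomial, Finsupp.single_eq_of_ne h.symm, zero_smul]

theorem fs_sub_add {d e : Fin n →₀ ℕ} {i : Fin n} (h : 1 ≤ d i) :
    d - Finsupp.single i 1 + e = d + e - Finsupp.single i 1 := by
  ext j
  by_cases hj : j = i
  · subst hj
    simp only [Finsupp.add_apply, Finsupp.tsub_apply, Finsupp.single_eq_same]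
    omega
  · simp only [Finsupp.add_apply, Finsupp.tsub_apply,
      Finsupp.single_eq_of_ne hj, Finsupp.single_apply]
    omega

theorem fs_sub_zero {d : Fin n →₀ ℕ} {i : Fin n} (h : d i = 0) :
    d - Finsupp.single i 1 = d := by
  ext j
  by_cases hj : j = i
  · subst hj; simp only [Finsupp.tsub_apply, Finsupp.single_eq_same]; omega
  · simp only [Finsupp.tsub_apply, Finsupp.single_apply]
    split
    · omega
    · omega

theorem fs_add_sub {d e : Fin n →₀ ℕ} {i : Fin n} (h : 1 ≤ e i) :
    d + (e - Finsupp.single i 1) = d + e - Finsupp.single i 1 := by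
  rw [add_comm d, fs_sub_add h, add_comm e d]

theorem pd_mul_monomial (i : Fin n) (d e : Fin n →₀ ℕ) (c c' : R) :
    pd i (MvPowerSeries.monomial (R := R) d c * MvPowerSeries.monomial (R := R) e c')
      = pd i (MvPowerSeries.monomial (R := R) d c) * MvPowerSeries.monomial (R := R) e c'
        + MvPowerSeries.monomial (R := R) d c * pd i (MvPowerSeries.monomial (R := R) e c') := by
  rw [MvPowerSeries.monomial_mul_monomial, pd_monomial, pd_monomial, pd_monomial,
    smul_mul_assoc, mul_smul_comm, MvPowerSeries.monomial_mul_monomial,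
    MvPowerSeries.monomial_mul_monomial, Finsupp.add_apply]
  by_cases hd : d i = 0
  · rw [hd, zero_smul, zero_add, zero_add]
    by_cases he : e i = 0
    · rw [he, zero_smul, zero_smul]
    · rw [fs_add_sub (by omega)]
  · have h1 : d - Finsupp.single i 1 + e = d + e - Finsupp.single i 1 :=
      fs_sub_add (by omega)
    by_cases he : e i = 0
    · rw [he, add_zero, zero_smul, add_zero, h1]
    · rw [h1, fs_add_sub (by omega), ← add_smul]

end Stmt16Aux
namespace Stmt16Aux
open MvPowerSeries Finset

variable {n : ℕ} {R : Type*} [CommRing R]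

theorem pd_mul_TN (i : Fin n) (N : ℕ) (f g : MvPowerSeries (Fin n) R) :
    pd i (TN N f * TN N g) = pd i (TN N f) * TN N g + TN N f * pd i (TN N g) := by
  have h1 : pd i (TN N f) * TN N g
      = ∑ d ∈ DD n N, ∑ e ∈ DD n N,
          pd i (MvPowerSeries.monomial (R := R) d (MvPowerSeries.coeff (R := R) d f))
            * MvPowerSeries.monomial (R := R) e (MvPowerSeries.coeff (R := R) e g) := by
    rw [TN, TN, pd_sum, Finset.sum_mul_sum]
  have h2 : TN N f * pd i (TN N g)
      = ∑ d ∈ DD n N, ∑ e ∈ DD n N,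
          MvPowerSeries.monomial (R := R) d (MvPowerSeries.coeff (R := R) d f)
            * pd i (MvPowerSeries.monomial (R := R) e (MvPowerSeries.coeff (R := R) e g)) := by
    rw [TN, TN, pd_sum, Finset.sum_mul_sum]
  have h0 : pd i (TN N f * TN N g)
      = ∑ d ∈ DD n N, ∑ e ∈ DD n N,
          pd i (MvPowerSeries.monomial (R := R) d (MvPowerSeries.coeff (R := R) d f)
            * MvPowerSeries.monomial (R := R) e (MvPowerSeries.coeff (R := R) e g)) := by
    rw [TN, TN, Finset.sum_mul_sum, pd_sum]
    exact Finset.sum_congr rfl fun d _ => pd_sum i _ _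
  rw [h0, h1, h2, ← Finset.sum_add_distrib]
  apply Finset.sum_congr rfl
  intro d _
  rw [← Finset.sum_add_distrib]
  exact Finset.sum_congr rfl fun e _ => pd_mul_monomial i d e _ _

theorem pd_mul (i : Fin n) (f g : MvPowerSeries (Fin n) R) :
    pd i (f * g) = pd i f * g + f * pd i g := by
  apply MvPowerSeries.ext; intro d
  set N := degT d + 1 with hN
  have hTf : ∀ e, degT e ≤ N → MvPowerSeries.coeff (R := R) e f = MvPowerSeries.coeff (R := R) e (TN N f) :=
    fun e he => (coeff_TN he f).symm
  have hTg : ∀ e, degT e ≤ N → MvPowerSeries.coeff (R := R) e g = MvPowerSeries.coeff (R := R) e (TN N g) :=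
    fun e he => (coeff_TN he g).symm
  have L : MvPowerSeries.coeff (R := R) d (pd i (f * g))
      = MvPowerSeries.coeff (R := R) d (pd i (TN N f * TN N g)) := by
    rw [coeff_pd, coeff_pd]
    congr 1
    exact coeff_mul_congr hTf hTg (by rw [degT_add, degT_single])
  have R1 : MvPowerSeries.coeff (R := R) d (pd i f * g)
      = MvPowerSeries.coeff (R := R) d (pd i (TN N f) * TN N g) := by
    apply coeff_mul_congr (N := degT d) _ _ (le_refl _)
    · intro e he
      rw [coeff_pd, coeff_pd]
      congr 1
      exact hTf _ (by rw [degT_add, degT_single]; omega)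
    · intro e he; exact hTg e (by omega)
  have R2 : MvPowerSeries.coeff (R := R) d (f * pd i g)
      = MvPowerSeries.coeff (R := R) d (TN N f * pd i (TN N g)) := by
    apply coeff_mul_congr (N := degT d) _ _ (le_refl _)
    · intro e he; exact hTf e (by omega)
    · intro e he
      rw [coeff_pd, coeff_pd]
      congr 1
      exact hTg _ (by rw [degT_add, degT_single]; omega)
  rw [map_add, L, pd_mul_TN, map_add, R1, R2]

theorem pd_C (i : Fin n) (r : R) : pd i (MvPowerSeries.C (σ := Fin n) (R := R) r) = 0 := by
  have : (MvPowerSeries.C (σ := Fin n) (R := R) r) = MvPowerSeries.monomial (R := R) 0 r := rfl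
  rw [this, pd_monomial]
  simp

/-- The chain rule for coerced polynomials. -/
theorem chain_poly {a : Fin n → MvPowerSeries (Fin n) R} (ha : vordGE 1 a) (i : Fin n)
    (p : MvPolynomial (Fin n) R) :
    pd i (sub (↑p) a) = ∑ j, sub (pd j (↑p)) a * pd i (a j) := by
  induction p using MvPolynomial.induction_on with
  | C c =>
    rw [MvPolynomial.coe_C, sub_C' ha, pd_C]
    apply (Finset.sum_eq_zero _).symm
    intro j _
    rw [pd_C, sub_zero' ha, zero_mul]
  | add p q hp hq =>
    rw [MvPolynomial.coe_add, sub_add' ha, pd_add, hp, hq, ← Finset.sum_add_distrib]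
    exact Finset.sum_congr rfl fun j _ => by rw [pd_add, sub_add' ha, add_mul]
  | mul_X p k hp =>
    rw [MvPolynomial.coe_mul, MvPolynomial.coe_X, sub_mul' ha, pd_mul, sub_X' ha]
    have hXk : ∀ j, pd j (MvPowerSeries.X k : MvPowerSeries (Fin n) R)
        = if j = k then 1 else 0 := by
      intro j
      split
      · rename_i h; subst h; exact pd_X_self j
      · rename_i h; exact pd_X_ne (fun hh => h hh.symm)
    have : ∀ j, sub (pd j ((↑p : MvPowerSeries (Fin n) R) * MvPowerSeries.X k)) a * pd i (a j)
        = (sub (pd j ↑p) a * pd i (a j)) * a k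
          + (if j = k then sub (↑p) a * pd i (a k) else 0) := by
      intro j
      rw [pd_mul, hXk j, sub_add' ha, sub_mul' ha, sub_mul' ha, sub_X' ha]
      split
      · rename_i h; subst h
        rw [sub_one' ha, mul_one]
        ring
      · rw [sub_zero' ha, mul_zero, add_zero]
        ring
    rw [Finset.sum_congr rfl fun j _ => this j, Finset.sum_add_distrib,
      Finset.sum_ite_eq' Finset.univ k, if_pos (Finset.mem_univ k), hp,
      Finset.sum_mul]

end Stmt16Aux
namespace Stmt16Aux
open MvPowerSeries Finset

variable {n : ℕ} {R : Type*} [CommRing R]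

theorem TN_eq_coe (N : ℕ) (f : MvPowerSeries (Fin n) R) :
    TN N f = ((∑ d ∈ DD n N, MvPolynomial.monomial d (MvPowerSeries.coeff (R := R) d f) :
      MvPolynomial (Fin n) R) : MvPowerSeries (Fin n) R) := by
  rw [TN]
  induction (DD n N) using Finset.cons_induction with
  | empty => simp
  | cons d s hd ih =>
    rw [Finset.sum_cons, Finset.sum_cons, MvPolynomial.coe_add, MvPolynomial.coe_monomial, ih]

/-- The chain rule. -/
theorem chain_rule {a : Fin n → MvPowerSeries (Fin n) R} (ha : vordGE 1 a) (i : Fin n)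
    (f : MvPowerSeries (Fin n) R) :
    pd i (sub f a) = ∑ j, sub (pd j f) a * pd i (a j) := by
  apply MvPowerSeries.ext; intro m
  set N := degT m + 1 with hN
  have hTf : ∀ e, degT e ≤ N → MvPowerSeries.coeff (R := R) e f = MvPowerSeries.coeff (R := R) e (TN N f) :=
    fun e he => (coeff_TN he f).symm
  have L : MvPowerSeries.coeff (R := R) m (pd i (sub f a))
      = MvPowerSeries.coeff (R := R) m (pd i (sub (TN N f) a)) := by
    rw [coeff_pd, coeff_pd]
    congr 1
    apply coeff_sub_congr ha
    intro e he
    exact hTf e (by rw [degT_add, degT_single] at he; omega)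
  have Rj : ∀ j, MvPowerSeries.coeff (R := R) m (sub (pd j f) a * pd i (a j))
      = MvPowerSeries.coeff (R := R) m (sub (pd j (TN N f)) a * pd i (a j)) := by
    intro j
    rw [MvPowerSeries.coeff_mul, MvPowerSeries.coeff_mul]
    apply Finset.sum_congr rfl
    rintro ⟨m1, m2⟩ hm
    rw [Finset.HasAntidiagonal.mem_antidiagonal] at hm
    have hm1 : degT m1 ≤ degT m := by
      have : degT m1 + degT m2 = degT m := by rw [← degT_add, hm]
      omega
    congr 1
    apply coeff_sub_congr ha
    intro e he
    have he' : degT e ≤ degT m1 := he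
    rw [coeff_pd, coeff_pd]
    congr 1
    exact hTf _ (by rw [degT_add, degT_single]; omega)
  have key : pd i (sub (TN N f) a) = ∑ j, sub (pd j (TN N f)) a * pd i (a j) := by
    rw [TN_eq_coe]
    exact chain_poly ha i _
  rw [L, key, map_sum, map_sum]
  exact Finset.sum_congr rfl fun j _ => (Rj j).symm

end Stmt16Aux
namespace Stmt16Aux
open MvPowerSeries Finset

variable {n : ℕ} {R : Type*} [CommRing R]

instance : CharZero (PowerSeries ℂ) := by
  refine ⟨fun a b h => ?_⟩
  have := congrArg (PowerSeries.constantCoeff (R := ℂ)) h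
  rw [map_natCast, map_natCast] at this
  exact_mod_cast this

theorem eq_of_pd_eq [NoZeroDivisors R] [CharZero R] {f g : MvPowerSeries (Fin n) R}
    (h0 : MvPowerSeries.coeff (R := R) 0 f = MvPowerSeries.coeff (R := R) 0 g)
    (h : ∀ i, pd i f = pd i g) : f = g := by
  apply MvPowerSeries.ext; intro d
  by_cases hd : d = 0
  · subst hd; exact h0
  · have : ∃ i, d i ≠ 0 := by
      by_contra hc
      push_neg at hc
      exact hd (Finsupp.ext fun i => hc i)
    obtain ⟨i, hi⟩ := this
    set e := d - Finsupp.single i 1 with he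
    have hde : e + Finsupp.single i 1 = d :=
      tsub_add_cancel_of_le (Finsupp.single_le_iff.mpr (by omega))
    have hcoeff := congrArg (MvPowerSeries.coeff (R := R) e) (h i)
    rw [coeff_pd, coeff_pd, hde, nsmul_eq_mul, nsmul_eq_mul] at hcoeff
    exact mul_left_cancel₀ (Nat.cast_ne_zero.mpr (Nat.succ_ne_zero (e i))) hcoeff

theorem ordGE_X (i : Fin n) : ordGE 1 (MvPowerSeries.X i : MvPowerSeries (Fin n) R) := by
  rw [ordGE_iff]
  intro d hd
  have hd0 : d = 0 := degT_eq_zero.mp (by omega)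
  subst hd0
  rw [MvPowerSeries.coeff_zero_X]

theorem ordGE_C_mul {k : ℕ} {f : MvPowerSeries (Fin n) R} (hf : ordGE k f) (r : R) :
    ordGE k (MvPowerSeries.C (σ := Fin n) (R := R) r * f) := by
  intro d hd
  rw [MvPowerSeries.coeff_C_mul, hf d hd, mul_zero]

theorem ordGE_pd {k : ℕ} {f : MvPowerSeries (Fin n) R} (hf : ordGE (k + 1) f) (i : Fin n) :
    ordGE k (pd i f) := by
  rw [ordGE_iff] at hf ⊢
  intro d hd
  rw [coeff_pd, hf _ (by rw [degT_add, degT_single]; omega), smul_zero]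

theorem ordGE_map {S : Type*} [CommRing S] (φ : R →+* S) {k : ℕ} {f : MvPowerSeries (Fin n) R}
    (hf : ordGE k f) : ordGE k (MvPowerSeries.map (σ := Fin n) φ f) := by
  intro d hd
  rw [MvPowerSeries.coeff_map, hf d hd, map_zero]

theorem ordGE_add {k : ℕ} {f g : MvPowerSeries (Fin n) R} (hf : ordGE k f) (hg : ordGE k g) :
    ordGE k (f + g) := by
  intro d hd
  rw [map_add, hf d hd, hg d hd, add_zero]

theorem ordGE_neg {k : ℕ} {f : MvPowerSeries (Fin n) R} (hf : ordGE k f) : ordGE k (-f) := by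
  intro d hd
  rw [map_neg, hf d hd, neg_zero]

theorem pd_map {S : Type*} [CommRing S] (φ : R →+* S) (i : Fin n) (f : MvPowerSeries (Fin n) R) :
    pd i (MvPowerSeries.map (σ := Fin n) φ f) = MvPowerSeries.map (σ := Fin n) φ (pd i f) := by
  apply MvPowerSeries.ext; intro d
  rw [coeff_pd, MvPowerSeries.coeff_map, MvPowerSeries.coeff_map, coeff_pd,
    nsmul_eq_mul, nsmul_eq_mul, map_mul, map_natCast]

end Stmt16Aux
namespace Stmt16Aux
open MvPowerSeries Finset

variable {n : ℕ}

theorem csmul_eq (c : ℂ) (f : PSZT n) :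
    c • f = MvPowerSeries.C (σ := Fin n) (R := (PowerSeries ℂ)) (PowerSeries.C (R := ℂ) c) * f := by
  apply MvPowerSeries.ext; intro d
  rw [MvPowerSeries.coeff_C_mul, ← PowerSeries.smul_eq_C_mul]
  rfl

theorem tT_cancel {A B : PSZT n} (h : tT * A = tT * B) : A = B := by
  have htT : (tT : PSZT n) = MvPowerSeries.C (σ := Fin n) (R := (PowerSeries ℂ)) PowerSeries.X := rfl
  rw [htT] at h
  apply MvPowerSeries.ext; intro d
  have hd := congrArg (MvPowerSeries.coeff (R := (PowerSeries ℂ)) d) h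
  rw [MvPowerSeries.coeff_C_mul, MvPowerSeries.coeff_C_mul] at hd
  apply PowerSeries.ext; intro k
  have := congrArg (PowerSeries.coeff (R := ℂ) (k + 1)) hd
  rwa [PowerSeries.coeff_succ_X_mul, PowerSeries.coeff_succ_X_mul] at this

theorem c2_mul_two :
    (MvPowerSeries.C (σ := Fin n) (R := (PowerSeries ℂ)) (PowerSeries.C (R := ℂ) (2:ℂ)⁻¹)) * 2 = 1 := by
  have h : (2 : PSZT n) = MvPowerSeries.C (σ := Fin n) (R := (PowerSeries ℂ)) (PowerSeries.C (R := ℂ) 2) := by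
    rw [map_ofNat, map_ofNat]
  rw [h, ← map_mul, ← map_mul]
  norm_num

theorem ordGE_sub {R : Type*} [CommRing R] {k : ℕ} {f g : MvPowerSeries (Fin n) R}
    (hf : ordGE k f) (hg : ordGE k g) : ordGE k (f - g) := by
  intro d hd
  rw [map_sub, hf d hd, hg d hd, sub_zero]

theorem pd_inclZ (j : Fin n) (f : MvPowerSeries (Fin n) ℂ) :
    pd j (inclZ f : PSZT n) = inclZ (pd j f) :=
  pd_map _ j f

end Stmt16Aux
open MvPowerSeries Finset Stmt16Aux

/-- with `G_t(z) = z + t∇Q_t(z)` the formal inverse of `F_t(z) = z - t∇P(z)`,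
we have `Q_t(F_t(z)) = P(z) - (t/2)⟨∇P, ∇P⟩` and `P(G_t(z)) = Q_t(z) + (t/2)⟨∇Q_t, ∇Q_t⟩`. -/
theorem stmt16 {n : ℕ} (P : MvPowerSeries (Fin n) ℂ) (hP : ordGE 2 P)
    (Qt : PSZT n) (hQt : ordGE 2 Qt)
    (hinv : IsInv (fun i => MvPowerSeries.X i - tT * inclZ (pd i P))
                  (fun i => MvPowerSeries.X i + tT * pd i Qt)) :
    sub Qt (fun j => MvPowerSeries.X j - tT * inclZ (pd j P)) =
      inclZ P - (2 : ℂ)⁻¹ • (tT * inclZ (∑ i, pd i P * pd i P)) ∧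
    sub (inclZ P) (fun j => MvPowerSeries.X j + tT * pd j Qt) =
      Qt + (2 : ℂ)⁻¹ • (tT * ∑ i, pd i Qt * pd i Qt) := by
  classical
  have hSAA' : (inclZ (∑ i, pd i P * pd i P) : PSZT n)
      = ∑ i, inclZ (pd i P) * inclZ (pd i P) := by
    rw [map_sum]
    exact Finset.sum_congr rfl fun i _ => map_mul _ _ _
  rw [csmul_eq, csmul_eq, hSAA']
  set F : Fin n → PSZT n := fun j => MvPowerSeries.X j - tT * inclZ (pd j P) with hF
  set G : Fin n → PSZT n := fun j => MvPowerSeries.X j + tT * pd j Qt with hG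
  set c2 : PSZT n := MvPowerSeries.C (σ := Fin n) (R := (PowerSeries ℂ)) (PowerSeries.C (R := ℂ) (2:ℂ)⁻¹) with hc2
  have htT : (tT : PSZT n) = MvPowerSeries.C (σ := Fin n) (R := (PowerSeries ℂ)) PowerSeries.X := rfl
  have hc2two : c2 * 2 = 1 := by rw [hc2]; exact c2_mul_two
  have hFo : vordGE 1 F := by
    intro j
    simp only [hF]
    exact ordGE_sub (ordGE_X j) (ordGE_C_mul (ordGE_map _ (ordGE_pd hP j)) _)
  have hGo : vordGE 1 G := by
    intro j
    simp only [hG]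
    exact ordGE_add (ordGE_X j) (ordGE_C_mul (ordGE_pd hQt j) _)
  have hQt0 : MvPowerSeries.coeff (R := (PowerSeries ℂ)) 0 Qt = 0 := hQt 0 (by simp)
  have hP0 : MvPowerSeries.coeff (R := ℂ) 0 P = 0 := hP 0 (by simp)
  set u : PSZT n := c2 * (∑ k, MvPowerSeries.X k ^ 2) - tT * inclZ P with hu
  set v : PSZT n := c2 * (∑ k, MvPowerSeries.X k ^ 2) + tT * Qt with hv
  -- partial derivatives of the sum of squares
  have hpdSX : ∀ j, pd j (∑ k, (MvPowerSeries.X k : PSZT n) ^ 2) = 2 * MvPowerSeries.X j := by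
    intro j
    rw [pd_sum]
    rw [Finset.sum_eq_single j (fun k _ hk => by
        rw [pow_two, pd_mul, pd_X_ne hk, zero_mul, mul_zero, add_zero])
      (fun h => absurd (Finset.mem_univ j) h)]
    rw [pow_two, pd_mul, pd_X_self, one_mul, mul_one, two_mul]
  have hpdu : ∀ j, pd j u = F j := by
    intro j
    rw [hu, hc2, htT, pd_sub, pd_C_mul, pd_C_mul, ← hc2, ← htT, hpdSX, pd_inclZ,
      ← mul_assoc, hc2two, one_mul]
  have hpdv : ∀ j, pd j v = G j := by
    intro j
    rw [hv, hc2, htT, pd_add, pd_C_mul, pd_C_mul, ← hc2, ← htT, hpdSX,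
      ← mul_assoc, hc2two, one_mul]
  -- constant coefficients
  have hSX0 : MvPowerSeries.coeff (R := (PowerSeries ℂ)) 0 (∑ k, (MvPowerSeries.X k : PSZT n) ^ 2)
      = 0 := by
    rw [map_sum]
    refine Finset.sum_eq_zero fun k _ => ?_
    rw [MvPowerSeries.coeff_zero_eq_constantCoeff_apply, map_pow, MvPowerSeries.constantCoeff_X,
      zero_pow (by norm_num : (2:ℕ) ≠ 0)]
  have hinclP0 : MvPowerSeries.coeff (R := (PowerSeries ℂ)) 0 (inclZ P : PSZT n) = 0 := by
    rw [show (inclZ P : PSZT n) = MvPowerSeries.map (σ := Fin n) (PowerSeries.C (R := ℂ)) P from rfl,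
      MvPowerSeries.coeff_map, hP0, map_zero]
  have hvz : MvPowerSeries.coeff (R := (PowerSeries ℂ)) 0 v = 0 := by
    rw [hv, map_add, hc2, htT, MvPowerSeries.coeff_C_mul, MvPowerSeries.coeff_C_mul,
      hSX0, hQt0, mul_zero, mul_zero, add_zero]
  have huz : MvPowerSeries.coeff (R := (PowerSeries ℂ)) 0 u = 0 := by
    rw [hu, map_sub, hc2, htT, MvPowerSeries.coeff_C_mul, MvPowerSeries.coeff_C_mul,
      hSX0, hinclP0, mul_zero, mul_zero, sub_zero]
  constructor
  · -- first identity
    have hSFX0 : MvPowerSeries.coeff (R := (PowerSeries ℂ)) 0 (∑ j, F j * MvPowerSeries.X j) = 0 := by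
      rw [map_sum]
      refine Finset.sum_eq_zero fun j _ => ?_
      rw [MvPowerSeries.coeff_zero_eq_constantCoeff_apply, map_mul,
        MvPowerSeries.constantCoeff_X, mul_zero]
    have KL1 : sub v F = (∑ j, F j * MvPowerSeries.X j) - u := by
      apply eq_of_pd_eq
      · rw [MvPowerSeries.coeff_zero_eq_constantCoeff_apply, constantCoeff_sub' hFo,
          ← MvPowerSeries.coeff_zero_eq_constantCoeff_apply, hvz, map_sub, hSFX0, huz, sub_zero]
      · intro i
        rw [chain_rule hFo i v]
        rw [Finset.sum_congr rfl fun j _ => by rw [hpdv j, hinv.2 j]]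
        rw [pd_sub, pd_sum, hpdu i,
          Finset.sum_congr rfl fun j (_ : j ∈ Finset.univ) => pd_mul i (F j) (MvPowerSeries.X j),
          Finset.sum_add_distrib]
        have hsum2 : ∑ j, F j * pd i (MvPowerSeries.X j) = F i := by
          rw [Finset.sum_eq_single i (fun k _ hk => by rw [pd_X_ne hk, mul_zero])
            (fun h => absurd (Finset.mem_univ i) h), pd_X_self, mul_one]
        rw [hsum2, add_sub_cancel_right]
        exact Finset.sum_congr rfl fun j _ => mul_comm _ _
    have hsubSX : sub (∑ k, (MvPowerSeries.X k : PSZT n) ^ 2) F = ∑ k, F k ^ 2 := by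
      rw [sub_sum' hFo]
      exact Finset.sum_congr rfl fun k _ => by
        rw [pow_two, sub_mul' hFo, sub_X' hFo, ← pow_two]
    have E1 : c2 * (∑ k, F k ^ 2) + tT * sub Qt F = (∑ j, F j * MvPowerSeries.X j) - u := by
      rw [← KL1, hv, hc2, htT, sub_add' hFo, sub_C_mul hFo, sub_C_mul hFo, ← hc2, ← htT, hsubSX]
    rw [hu] at E1
    have S1 : (∑ k, F k ^ 2) = (∑ k, (MvPowerSeries.X k : PSZT n) ^ 2)
        - 2 * (tT * ∑ k, inclZ (pd k P) * MvPowerSeries.X k)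
        + tT ^ 2 * (∑ k, inclZ (pd k P) * inclZ (pd k P)) := by
      simp only [Finset.mul_sum]
      rw [← Finset.sum_sub_distrib, ← Finset.sum_add_distrib]
      exact Finset.sum_congr rfl fun k _ => by simp only [hF]; ring
    have S2 : (∑ j, F j * MvPowerSeries.X j) = (∑ k, (MvPowerSeries.X k : PSZT n) ^ 2)
        - tT * ∑ k, inclZ (pd k P) * MvPowerSeries.X k := by
      simp only [Finset.mul_sum]
      rw [← Finset.sum_sub_distrib]
      exact Finset.sum_congr rfl fun k _ => by simp only [hF]; ring
    apply tT_cancel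
    linear_combination E1 - c2 * S1 + S2
      - ((∑ k, (MvPowerSeries.X k : PSZT n) ^ 2)
          - tT * ∑ k, inclZ (pd k P) * MvPowerSeries.X k) * hc2two
  · -- second identity
    have hSGX0 : MvPowerSeries.coeff (R := (PowerSeries ℂ)) 0 (∑ j, G j * MvPowerSeries.X j) = 0 := by
      rw [map_sum]
      refine Finset.sum_eq_zero fun j _ => ?_
      rw [MvPowerSeries.coeff_zero_eq_constantCoeff_apply, map_mul,
        MvPowerSeries.constantCoeff_X, mul_zero]
    have KL2 : sub u G = (∑ j, G j * MvPowerSeries.X j) - v := by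
      apply eq_of_pd_eq
      · rw [MvPowerSeries.coeff_zero_eq_constantCoeff_apply, constantCoeff_sub' hGo,
          ← MvPowerSeries.coeff_zero_eq_constantCoeff_apply, huz, map_sub, hSGX0, hvz, sub_zero]
      · intro i
        rw [chain_rule hGo i u]
        rw [Finset.sum_congr rfl fun j _ => by rw [hpdu j, hinv.1 j]]
        rw [pd_sub, pd_sum, hpdv i,
          Finset.sum_congr rfl fun j (_ : j ∈ Finset.univ) => pd_mul i (G j) (MvPowerSeries.X j),
          Finset.sum_add_distrib]
        have hsum2 : ∑ j, G j * pd i (MvPowerSeries.X j) = G i := by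
          rw [Finset.sum_eq_single i (fun k _ hk => by rw [pd_X_ne hk, mul_zero])
            (fun h => absurd (Finset.mem_univ i) h), pd_X_self, mul_one]
        rw [hsum2, add_sub_cancel_right]
        exact Finset.sum_congr rfl fun j _ => mul_comm _ _
    have hsubSX : sub (∑ k, (MvPowerSeries.X k : PSZT n) ^ 2) G = ∑ k, G k ^ 2 := by
      rw [sub_sum' hGo]
      exact Finset.sum_congr rfl fun k _ => by
        rw [pow_two, sub_mul' hGo, sub_X' hGo, ← pow_two]
    have E2 : c2 * (∑ k, G k ^ 2) - tT * sub (inclZ P) G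
        = (∑ j, G j * MvPowerSeries.X j) - v := by
      rw [← KL2, hu, hc2, htT, sub_sub'' hGo, sub_C_mul hGo, sub_C_mul hGo, ← hc2, ← htT, hsubSX]
    rw [hv] at E2
    have S1 : (∑ k, G k ^ 2) = (∑ k, (MvPowerSeries.X k : PSZT n) ^ 2)
        + 2 * (tT * ∑ k, pd k Qt * MvPowerSeries.X k)
        + tT ^ 2 * (∑ k, pd k Qt * pd k Qt) := by
      simp only [Finset.mul_sum]
      rw [← Finset.sum_add_distrib, ← Finset.sum_add_distrib]
      exact Finset.sum_congr rfl fun k _ => by simp only [hG]; ring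
    have S2 : (∑ j, G j * MvPowerSeries.X j) = (∑ k, (MvPowerSeries.X k : PSZT n) ^ 2)
        + tT * ∑ k, pd k Qt * MvPowerSeries.X k := by
      simp only [Finset.mul_sum]
      rw [← Finset.sum_add_distrib]
      exact Finset.sum_congr rfl fun k _ => by simp only [hG]; ring
    apply tT_cancel
    linear_combination (-1 : PSZT n) * E2 + c2 * S1 - S2
      + ((∑ k, (MvPowerSeries.X k : PSZT n) ^ 2)
          + tT * ∑ k, pd k Qt * MvPowerSeries.X k) * hc2two
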